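/- Let f belong to the class S, let p(z) = (1/2)·Log((1+z)/(1−z)), let c be a purely imaginary complex number (Re c = 0), and let 0 < r < 1 and 0 < r' < 1. Suppose that the image of the disk {|z| < r} under f is a translate of the image of the disk {|z| < r'} under p, namely f({|z| < r}) + c = p({|z| < r'}) (as subsets of ℂ). Then r' ≥ r, and r' = r holds if and only if f(z) = p(z) for all z in the unit disk (in which case c = 0). -/

import Mathlib

open Complex Metric Set

/-! The inverse of `p = artanh` is `tanh`, so `g = tanh ∘ (f + c)` maps the disk of radius `r`
into the disk of radius `r'`, with `g 0 = a` where `p a = c`, and `g' 0 = 1 - a²`. The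
Schwarz–Pick inequality, obtained from the Schwarz lemma after composing `g` with the automorphism
of the disk of radius `r'` sending `a` to `0`, gives `1 - |a|² ≤ |1 - a²| ≤ (r'² - |a|²) / (r r')`,
which forces `r ≤ r'`, and `a = 0` when `r = r'`. In that case `g` is a self-map of the disk
fixing `0` with `g' 0 = 1`, hence the identity, so `f = p` near `0` and then on all of `U` by the
identity theorem. Conversely, if `f = p` the hypothesis is symmetric in `r` and `r'` (with `-c`
for `c`), so also `r' ≤ r`. -/

open ComplexConjugate

theorem le_and_eq_zero_of_one_sub_sq_le {r r' s : ℝ} (hr : 0 < r) (hr' : r' < 1) (hs : 0 ≤ s)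
    (hsr : s < r') (h : 1 - s ^ 2 ≤ (r' ^ 2 - s ^ 2) / (r * r')) : r ≤ r' ∧ (r = r' → s = 0) := by
  have hr'0 : 0 < r' := hs.trans_lt hsr
  rw [le_div_iff₀ (mul_pos hr hr'0)] at h
  have hs1 : 0 < 1 - s ^ 2 := by nlinarith
  refine ⟨?_, fun hrr => ?_⟩
  · by_contra! hlt
    nlinarith [mul_lt_mul_of_pos_left (mul_lt_mul_of_pos_right hlt hr'0) hs1,
      mul_nonneg (sq_nonneg s) (show 0 ≤ 1 - r' ^ 2 by nlinarith)]
  · subst hrr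
    have : s ^ 2 * (1 - r ^ 2) ≤ 0 := by nlinarith
    have : s ^ 2 ≤ 0 := nonpos_of_mul_nonpos_left this (by nlinarith)
    nlinarith

namespace Complex

noncomputable def artanh (z : ℂ) : ℂ := 1 / 2 * log ((1 + z) / (1 - z))

theorem artanh_zero : artanh 0 = 0 := by simp [artanh]

theorem exp_two_mul_artanh {z : ℂ} (h₁ : z ≠ 1) (h₂ : z ≠ -1) :
    exp (2 * artanh z) = (1 + z) / (1 - z) := by
  rw [artanh, ← mul_assoc, show (2 : ℂ) * (1 / 2) = 1 by norm_num, one_mul, exp_log]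
  exact div_ne_zero (by contrapose! h₂; linear_combination h₂) (sub_ne_zero.2 h₁.symm)

theorem exp_mul_two_cosh (w : ℂ) : exp w * (2 * cosh w) = exp (2 * w) + 1 := by
  rw [two_cosh, mul_add, ← exp_add, ← exp_add, two_mul]; simp

theorem exp_mul_two_sinh (w : ℂ) : exp w * (2 * sinh w) = exp (2 * w) - 1 := by
  rw [two_sinh, mul_sub, ← exp_add, ← exp_add, two_mul]; simp

theorem cosh_artanh_ne_zero {z : ℂ} (h₁ : z ≠ 1) (h₂ : z ≠ -1) : cosh (artanh z) ≠ 0 := by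
  have h₁' : 1 - z ≠ 0 := sub_ne_zero.2 h₁.symm
  have h := exp_mul_two_cosh (artanh z)
  rw [exp_two_mul_artanh h₁ h₂, div_add_one h₁', add_add_sub_cancel] at h
  intro h0
  rw [h0, mul_zero, mul_zero, eq_comm, div_eq_zero_iff] at h
  simp_all

theorem tanh_artanh {z : ℂ} (h₁ : z ≠ 1) (h₂ : z ≠ -1) : tanh (artanh z) = z := by
  have hc := cosh_artanh_ne_zero h₁ h₂
  have h₁' : 1 - z ≠ 0 := sub_ne_zero.2 h₁.symm
  have hcosh := exp_mul_two_cosh (artanh z)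
  have hsinh := exp_mul_two_sinh (artanh z)
  rw [exp_two_mul_artanh h₁ h₂] at hcosh hsinh
  field_simp at hcosh hsinh
  rw [tanh_eq_sinh_div_cosh, div_eq_iff hc]
  apply mul_left_cancel₀ (by simp [h₁'] : exp (artanh z) * 2 * (1 - z) ≠ 0)
  linear_combination hsinh - z * hcosh

theorem hasDerivAt_tanh {w : ℂ} (h : cosh w ≠ 0) : HasDerivAt tanh (1 - tanh w ^ 2) w := by
  rw [show (tanh : ℂ → ℂ) = sinh / cosh from funext tanh_eq_sinh_div_cosh]
  refine ((hasDerivAt_sinh w).div (hasDerivAt_cosh w) h).congr_deriv ?_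
  rw [Pi.div_apply, div_pow, one_sub_div (pow_ne_zero 2 h)]
  ring

theorem re_one_add_div_one_sub_pos {z : ℂ} (hz : ‖z‖ < 1) : 0 < ((1 + z) / (1 - z)).re := by
  have h : 1 - z ≠ 0 := by rintro h; rw [← sub_eq_zero.1 h] at hz; simp at hz
  rw [div_re, ← add_div]
  refine div_pos ?_ (normSq_pos.2 h)
  have : normSq z < 1 := by rw [normSq_eq_norm_sq]; nlinarith [norm_nonneg z]
  rw [normSq_apply] at this
  simp only [add_re, add_im, sub_re, sub_im, one_re, one_im]
  nlinarith

theorem hasDerivAt_artanh {z : ℂ} (hz : ‖z‖ < 1) : HasDerivAt artanh (1 / (1 - z ^ 2)) z := by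
  have h₁ : 1 - z ≠ 0 := by rintro h; rw [← sub_eq_zero.1 h] at hz; simp at hz
  have h₂ : 1 + z ≠ 0 := by rintro h; rw [eq_neg_of_add_eq_zero_right h] at hz; simp at hz
  have hq := ((hasDerivAt_id z).const_add 1).div ((hasDerivAt_id z).const_sub 1) h₁
  have hlog := (hasDerivAt_log (Or.inl (re_one_add_div_one_sub_pos hz))).comp z hq
  refine (hlog.const_mul (1 / 2 : ℂ) : HasDerivAt artanh _ z).congr_deriv ?_
  rw [show (1 : ℂ) - z ^ 2 = (1 - z) * (1 + z) by ring]
  simp only [id]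
  field_simp
  ring

theorem differentiableOn_artanh : DifferentiableOn ℂ artanh (ball 0 1) := fun _ hz =>
  (hasDerivAt_artanh (mem_ball_zero_iff.1 hz)).differentiableAt.differentiableWithinAt

theorem deriv_artanh_zero : deriv artanh 0 = 1 := by
  simpa using (hasDerivAt_artanh (z := 0) (by simp)).deriv

section DiskAutomorphism

variable {R : ℝ} {a w : ℂ}

noncomputable def diskAut (R : ℝ) (a w : ℂ) : ℂ := R ^ 2 * (w - a) / (R ^ 2 - conj a * w)

theorem norm_sq_sub_conj_mul_sub (R : ℝ) (a w : ℂ) :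
    ‖(R : ℂ) ^ 2 - conj a * w‖ ^ 2 - R ^ 2 * ‖w - a‖ ^ 2 =
      (R ^ 2 - ‖a‖ ^ 2) * (R ^ 2 - ‖w‖ ^ 2) := by
  simp only [Complex.sq_norm, ← ofReal_pow, normSq_apply, sub_re, sub_im, mul_re, mul_im, conj_re,
    conj_im, ofReal_re, ofReal_im]
  ring

theorem norm_mul_sub_lt_norm_sub_conj_mul (ha : ‖a‖ < R) (hw : ‖w‖ < R) :
    R * ‖w - a‖ < ‖(R : ℂ) ^ 2 - conj a * w‖ := by
  have h := norm_sq_sub_conj_mul_sub R a w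
  have hpos : 0 < (R ^ 2 - ‖a‖ ^ 2) * (R ^ 2 - ‖w‖ ^ 2) := by
    have := norm_nonneg a; have := norm_nonneg w
    apply mul_pos <;> nlinarith
  refine lt_of_pow_lt_pow_left₀ 2 (norm_nonneg _) ?_
  nlinarith

theorem diskAut_denom_ne_zero (ha : ‖a‖ < R) (hw : ‖w‖ < R) : (R : ℂ) ^ 2 - conj a * w ≠ 0 :=
  norm_pos_iff.1 <| (mul_nonneg ((norm_nonneg a).trans ha.le) (norm_nonneg _)).trans_lt
    (norm_mul_sub_lt_norm_sub_conj_mul ha hw)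

theorem norm_diskAut_lt (ha : ‖a‖ < R) (hw : ‖w‖ < R) : ‖diskAut R a w‖ < R := by
  have hR : 0 < R := (norm_nonneg a).trans_lt ha
  have hden := norm_pos_iff.2 (diskAut_denom_ne_zero ha hw)
  rw [diskAut, norm_div, norm_mul, norm_pow, norm_real, Real.norm_of_nonneg hR.le,
    div_lt_iff₀ hden, pow_two, mul_assoc]
  exact mul_lt_mul_of_pos_left (norm_mul_sub_lt_norm_sub_conj_mul ha hw) hR

theorem diskAut_self (R : ℝ) (a : ℂ) : diskAut R a a = 0 := by simp [diskAut]

theorem differentiableAt_diskAut (ha : ‖a‖ < R) (hw : ‖w‖ < R) :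
    DifferentiableAt ℂ (diskAut R a) w :=
  ((differentiableAt_id.sub_const a).const_mul _).div
    ((differentiableAt_id.const_mul _).const_sub _) (diskAut_denom_ne_zero ha hw)

theorem hasDerivAt_diskAut_self (ha : ‖a‖ < R) :
    HasDerivAt (diskAut R a) ((R ^ 2 / (R ^ 2 - ‖a‖ ^ 2) : ℝ) : ℂ) a := by
  have hden := diskAut_denom_ne_zero ha ha
  have hconj : conj a * a = ((‖a‖ ^ 2 : ℝ) : ℂ) := by
    rw [mul_comm, mul_conj, normSq_eq_norm_sq]
  rw [hconj] at hden
  refine (((hasDerivAt_id a).sub_const a).const_mul ((R : ℂ) ^ 2)).div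
    (((hasDerivAt_id a).const_mul (conj a)).const_sub ((R : ℂ) ^ 2)) ?_ |>.congr_deriv ?_
  · rwa [id, hconj]
  · simp only [id, hconj, sub_self, mul_zero, zero_mul, sub_zero]
    push_cast at hden ⊢
    field_simp

end DiskAutomorphism

section SchwarzPick

variable {g : ℂ → ℂ} {R R₁ R₂ : ℝ}

theorem norm_deriv_le_of_mapsTo_ball (hd : DifferentiableOn ℂ g (ball 0 R₁))
    (h_maps : MapsTo g (ball 0 R₁) (ball 0 R₂)) (h₀ : 0 < R₁) :
    ‖deriv g 0‖ ≤ (R₂ ^ 2 - ‖g 0‖ ^ 2) / (R₁ * R₂) := by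
  have ha : ‖g 0‖ < R₂ := mem_ball_zero_iff.1 (h_maps (mem_ball_self h₀))
  have hR₂ : 0 < R₂ := (norm_nonneg _).trans_lt ha
  have hgap : 0 < R₂ ^ 2 - ‖g 0‖ ^ 2 := by nlinarith [norm_nonneg (g 0)]
  have hmob_d : DifferentiableOn ℂ (diskAut R₂ (g 0) ∘ g) (ball 0 R₁) := fun z hz =>
    (differentiableAt_diskAut ha (mem_ball_zero_iff.1 (h_maps hz))).comp_differentiableWithinAt z
      (hd z hz)
  have hmob_maps : MapsTo (diskAut R₂ (g 0) ∘ g) (ball 0 R₁)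
      (closedBall ((diskAut R₂ (g 0) ∘ g) 0) R₂) := by
    rw [Function.comp_apply, diskAut_self]
    exact fun z hz => ball_subset_closedBall <|
      mem_ball_zero_iff.2 (norm_diskAut_lt ha (mem_ball_zero_iff.1 (h_maps hz)))
  have hschwarz := Complex.norm_deriv_le_div_of_mapsTo_ball hmob_d hmob_maps h₀
  rw [((hasDerivAt_diskAut_self ha).comp 0
      (hd.differentiableAt (ball_mem_nhds 0 h₀)).hasDerivAt).deriv,
    norm_mul, norm_real, Real.norm_of_nonneg (by positivity)] at hschwarz
  rw [div_mul_eq_mul_div, div_le_div_iff₀ hgap h₀] at hschwarz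
  rw [le_div_iff₀ (mul_pos h₀ hR₂)]
  nlinarith

theorem eqOn_id_of_mapsTo_ball_of_deriv_eq_one (hd : DifferentiableOn ℂ g (ball 0 R))
    (h_maps : MapsTo g (ball 0 R) (ball 0 R)) (h0 : g 0 = 0) (h' : deriv g 0 = 1) :
    EqOn g id (ball 0 R) := by
  intro z hz
  have hR := pos_of_mem_ball hz
  have h_maps' : MapsTo g (ball 0 R) (closedBall (g 0) R) := by
    rw [h0]; exact h_maps.mono_right ball_subset_closedBall
  have := Complex.affine_of_mapsTo_ball_of_norm_dslope_eq_div hd h_maps' (mem_ball_self hR)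
    (by rw [dslope_same, h', norm_one, div_self hR.ne']) hz
  simpa [h0, h'] using this

end SchwarzPick

theorem le_and_eqOn_of_mapsTo_add_artanh_image {F : ℂ → ℂ} {c : ℂ} {r r' : ℝ}
    (hF : DifferentiableOn ℂ F (ball 0 r)) (hF0 : F 0 = 0) (hF'0 : deriv F 0 = 1) (hr : 0 < r)
    (hr' : r' < 1) (h_maps : MapsTo (fun z => F z + c) (ball 0 r) (artanh '' ball 0 r')) :
    r ≤ r' ∧ (r = r' → EqOn F artanh (ball 0 r)) := by
  set g : ℂ → ℂ := fun z => tanh (F z + c)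
  have hg : ∀ z ∈ ball (0 : ℂ) r,
      g z ∈ ball 0 r' ∧ artanh (g z) = F z + c ∧ cosh (F z + c) ≠ 0 := by
    intro z hz
    obtain ⟨u, hu, hFu⟩ := h_maps hz
    have hFu : artanh u = F z + c := hFu
    have hu1 : ‖u‖ < 1 := (mem_ball_zero_iff.1 hu).trans hr'
    have h₁ : u ≠ 1 := by rintro rfl; simp at hu1
    have h₂ : u ≠ -1 := by rintro rfl; simp at hu1
    have hgu : g z = u := by rw [← tanh_artanh h₁ h₂, hFu]
    exact ⟨hgu ▸ hu, by rw [hgu, hFu], hFu ▸ cosh_artanh_ne_zero h₁ h₂⟩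
  have hg_deriv : ∀ z ∈ ball (0 : ℂ) r, HasDerivAt g ((1 - g z ^ 2) * deriv F z) z := by
    intro z hz
    have hFz := (hF.differentiableAt (isOpen_ball.mem_nhds hz)).hasDerivAt.add_const c
    exact (hasDerivAt_tanh (hg z hz).2.2).comp z hFz
  have hgd : DifferentiableOn ℂ g (ball 0 r) := fun z hz =>
    (hg_deriv z hz).differentiableAt.differentiableWithinAt
  have hg_maps : MapsTo g (ball 0 r) (ball 0 r') := fun z hz => (hg z hz).1
  have h0 : (0 : ℂ) ∈ ball 0 r := mem_ball_self hr
  have hg'0 : deriv g 0 = 1 - g 0 ^ 2 := by rw [(hg_deriv 0 h0).deriv, hF'0, mul_one]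
  have hpick := norm_deriv_le_of_mapsTo_ball hgd hg_maps hr
  have hlow : 1 - ‖g 0‖ ^ 2 ≤ ‖1 - g 0 ^ 2‖ := by
    have := norm_sub_norm_le (1 : ℂ) (g 0 ^ 2)
    rwa [norm_one, norm_pow] at this
  rw [hg'0] at hpick
  obtain ⟨hle, heq⟩ := le_and_eq_zero_of_one_sub_sq_le hr hr' (norm_nonneg _)
    (mem_ball_zero_iff.1 (hg_maps h0)) (hlow.trans hpick)
  refine ⟨hle, fun hrr => ?_⟩
  subst hrr
  have hg0 : g 0 = 0 := norm_eq_zero.1 (heq rfl)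
  have hc : c = 0 := by simpa [hg0, hF0, artanh_zero] using ((hg 0 h0).2.1).symm
  have hid := eqOn_id_of_mapsTo_ball_of_deriv_eq_one hgd hg_maps hg0 (by simp [hg'0, hg0])
  intro z hz
  simpa [hid hz, hc] using ((hg z hz).2.1).symm

end Complex

theorem schwarz_lemma_step_general
    (f : ℂ → ℂ)
    (hf_holo : DifferentiableOn ℂ f (ball (0 : ℂ) 1))
    (hf0 : f 0 = 0) (hf'0 : deriv f 0 = 1)
    (c : ℂ)
    (r r' : ℝ) (hr0 : 0 < r) (hr1 : r < 1) (hr'0 : 0 < r') (hr'1 : r' < 1)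
    (himage : (fun w => w + c) '' (f '' ball (0 : ℂ) r) =
      (fun z : ℂ => (1 / 2) * Complex.log ((1 + z) / (1 - z))) '' ball (0 : ℂ) r') :
    r ≤ r' ∧
      (r' = r ↔ ∀ z ∈ ball (0 : ℂ) 1,
        f z = (1 / 2) * Complex.log ((1 + z) / (1 - z))) := by
  change _ = artanh '' _ at himage
  have hmaps : MapsTo (fun z => f z + c) (ball 0 r) (artanh '' ball 0 r') := fun z hz =>
    himage ▸ mem_image_of_mem _ (mem_image_of_mem f hz)
  obtain ⟨hle, heq⟩ := le_and_eqOn_of_mapsTo_add_artanh_image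
    (hf_holo.mono (ball_subset_ball hr1.le)) hf0 hf'0 hr0 hr'1 hmaps
  refine ⟨hle, fun hrr => ?_, fun hf => ?_⟩
  · exact (hf_holo.analyticOnNhd isOpen_ball).eqOn_of_preconnected_of_eventuallyEq
      (differentiableOn_artanh.analyticOnNhd isOpen_ball) (convex_ball 0 1).isPreconnected
      (mem_ball_self one_pos) (Filter.eventuallyEq_of_mem (ball_mem_nhds 0 hr0) (heq hrr.symm))
  · change EqOn f artanh (ball 0 1) at hf
    have hmaps' : MapsTo (fun u => artanh u + -c) (ball 0 r') (artanh '' ball 0 r) := by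
      intro u hu
      obtain ⟨_, ⟨z, hz, rfl⟩, hzu⟩ := himage.symm ▸ mem_image_of_mem artanh hu
      have hzu' : f z + c = artanh u := hzu
      refine ⟨z, hz, ?_⟩
      show artanh z = artanh u + -c
      rw [← hzu', hf (ball_subset_ball hr1.le hz)]
      ring
    exact le_antisymm (le_and_eqOn_of_mapsTo_add_artanh_image
      (differentiableOn_artanh.mono (ball_subset_ball hr'1.le)) artanh_zero deriv_artanh_zero
      hr'0 hr1 hmaps').1 hle

/-- If `f ∈ S`, `c` is purely imaginary, `0 < r < 1`, `0 < r' < 1`, and the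
translate `f({|z| < r}) + c` equals `p({|z| < r'})` where `p(z) = (1/2)·Log((1+z)/(1-z))`,
then `r' ≥ r`, with equality iff `f = p` on the unit disk. -/
theorem schwarz_lemma_step
    (f : ℂ → ℂ)
    (hf_holo : DifferentiableOn ℂ f (ball (0 : ℂ) 1))
    (hf_inj : InjOn f (ball (0 : ℂ) 1))
    (hf0 : f 0 = 0) (hf'0 : deriv f 0 = 1)
    (c : ℂ) (hc : c.re = 0)
    (r r' : ℝ) (hr0 : 0 < r) (hr1 : r < 1) (hr'0 : 0 < r') (hr'1 : r' < 1)
    (himage : (fun w => w + c) '' (f '' ball (0 : ℂ) r) =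
      (fun z : ℂ => (1 / 2) * Complex.log ((1 + z) / (1 - z))) '' ball (0 : ℂ) r') :
    r ≤ r' ∧
      (r' = r ↔ ∀ z ∈ ball (0 : ℂ) 1,
        f z = (1 / 2) * Complex.log ((1 + z) / (1 - z))) :=
  schwarz_lemma_step_general f hf_holo hf0 hf'0 c r r' hr0 hr1 hr'0 hr'1 himage
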